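/- Fix an integer N ≥ 1 and integers χ, d. Then for every integer d ≥ 0 and 0 ≤ k ≤ d: C(-χ - N + d(N+1), k) = C(-χ + d(N+1), k) - Σ_{ℓ=1}^{k} (N/ℓ) C((N+1)(ℓ-1), ℓ-1) C(-χ + (d-ℓ)(N+1), k-ℓ). -/

import Mathlib

/-
Hagen–Rothe identity: with `A_ℓ(x, z) = x / (x + ℓz) · C(x + ℓz, ℓ)`,
`∑_{ℓ ≤ n} A_ℓ(x, z) C(y + (n - ℓ)z, n - ℓ) = C(x + y + nz, n)`.
Both sides satisfy `F(x, n + 1) = F(x - 1, n + 1) + F(x + z - 1, n)` by Pascal's rule, and at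
`x = 0` only the term `ℓ = 0` survives, so induction on `n` and then on the integer `x` (in both
directions) proves it. Taking `x = -N`, `z = N + 1` and `y = -χ + (d - k)(N + 1)` gives the
theorem, since `A_ℓ(-N, N + 1) = -(N/ℓ) C((N + 1)(ℓ - 1), ℓ - 1)` for `ℓ ≥ 1`.
-/

/-- Generalized binomial coefficient `C(a,k) ∈ ℚ`. -/
noncomputable def gchoose (a : ℤ) (k : ℕ) : ℚ :=
  (∏ i ∈ Finset.range k, ((a : ℚ) - (i : ℚ))) / (k.factorial : ℚ)

open Finset

theorem gchoose_eq_choose (a : ℤ) (k : ℕ) : gchoose a k = Ring.choose (a : ℚ) k := by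
  rw [Ring.choose_eq_smul, ← Polynomial.aeval_eq_smeval, Polynomial.aeval_def,
    ← Polynomial.eval_map, descPochhammer_map, descPochhammer_eval_eq_prod_range, gchoose,
    smul_eq_mul, div_eq_inv_mul]

section Rothe

variable {R : Type*} [CommRing R] [BinomialRing R]

theorem Ring.choose_succ_eq_sub_one_add (r : R) (k : ℕ) :
    Ring.choose r (k + 1) = Ring.choose (r - 1) k + Ring.choose (r - 1) (k + 1) := by
  simpa using Ring.choose_succ_succ (r - 1) k

theorem Ring.succ_nsmul_choose_succ (r : R) (k : ℕ) :
    (k + 1) • Ring.choose r (k + 1) = r * Ring.choose (r - 1) k := by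
  simpa using Ring.choose_smul_choose r (n := k + 1) (k := 1) (by omega)

/-- `x / (x + kz) · C(x + kz, k)`, written without division. -/
noncomputable def rotheCoeff (x z : R) : ℕ → R
  | 0 => 1
  | k + 1 => Ring.choose (x + (k + 1) * z) (k + 1) - z * Ring.choose (x + (k + 1) * z - 1) k

@[simp]
theorem rotheCoeff_zero (x z : R) : rotheCoeff x z 0 = 1 := rfl

theorem rotheCoeff_succ_eq_sub_one_add (x z : R) (k : ℕ) :
    rotheCoeff x z (k + 1) = rotheCoeff (x - 1) z (k + 1) + rotheCoeff (x + z - 1) z k := by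
  cases k with
  | zero => simp [rotheCoeff]
  | succ m =>
    simp only [rotheCoeff]
    push_cast
    have h₁ := Ring.choose_succ_eq_sub_one_add (x + (m + 1 + 1) * z) (m + 1)
    have h₂ := Ring.choose_succ_eq_sub_one_add (x + (m + 1 + 1) * z - 1) m
    rw [show x - 1 + (m + 1 + 1) * z = x + (m + 1 + 1) * z - 1 by ring,
      show x + z - 1 + (m + 1) * z = x + (m + 1 + 1) * z - 1 by ring]
    linear_combination h₁ - z * h₂

theorem succ_nsmul_rotheCoeff_succ (x z : R) (k : ℕ) :
    (k + 1) • rotheCoeff x z (k + 1) = x * Ring.choose (x + (k + 1) * z - 1) k := by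
  rw [rotheCoeff, nsmul_sub, Ring.succ_nsmul_choose_succ, nsmul_eq_mul]
  push_cast
  ring

theorem rotheCoeff_zero_left_succ (z : R) (k : ℕ) : rotheCoeff 0 z (k + 1) = 0 := by
  have := BinomialRing.toIsAddTorsionFree (R := R)
  have h := succ_nsmul_rotheCoeff_succ (0 : R) z k
  rw [zero_mul] at h
  exact nsmul_right_injective k.succ_ne_zero (h.trans (nsmul_zero _).symm)

noncomputable def rotheSum (x y z : R) (n : ℕ) : R :=
  ∑ p ∈ antidiagonal n, rotheCoeff x z p.1 * Ring.choose (y + p.2 * z) p.2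

theorem rotheSum_succ_eq_sub_one_add (x y z : R) (n : ℕ) :
    rotheSum x y z (n + 1) = rotheSum (x - 1) y z (n + 1) + rotheSum (x + z - 1) y z n := by
  simp only [rotheSum, Nat.sum_antidiagonal_succ, rotheCoeff_succ_eq_sub_one_add x z, add_mul,
    sum_add_distrib, rotheCoeff_zero]
  ring

theorem rotheSum_zero_left (y z : R) (n : ℕ) :
    rotheSum 0 y z n = Ring.choose (y + n * z) n := by
  cases n with
  | zero => simp [rotheSum]
  | succ n => simp [rotheSum, Nat.sum_antidiagonal_succ, rotheCoeff_zero_left_succ]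

theorem rotheSum_eq_choose (x z : ℤ) (y : R) (n : ℕ) :
    rotheSum (x : R) y z n = Ring.choose (x + y + n * z) n := by
  induction n generalizing x with
  | zero => simp [rotheSum]
  | succ n ih =>
    let D : ℤ → R := fun x ↦
      rotheSum (x : R) y z (n + 1) - Ring.choose (x + y + (n + 1 : ℕ) * z) (n + 1)
    have hD (x : ℤ) : D x = D (x - 1) := by
      have h := ih (x + z - 1)
      simp only [D]
      push_cast at h ⊢
      rw [rotheSum_succ_eq_sub_one_add, h, Ring.choose_succ_eq_sub_one_add]
      ring_nf
    have hD0 : D 0 = 0 := by simp [D, rotheSum_zero_left]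
    suffices D x = 0 from sub_eq_zero.1 this
    induction x using Int.induction_on with
    | zero => exact hD0
    | succ i hi => rwa [hD, add_sub_cancel_right]
    | pred i hi => rwa [hD] at hi

theorem rotheSum_eq_choose_add_sum_Icc (x y z : R) (n : ℕ) :
    rotheSum x y z n = Ring.choose (y + n * z) n
      + ∑ ℓ ∈ Icc 1 n, rotheCoeff x z ℓ * Ring.choose (y + (n - ℓ : ℕ) * z) (n - ℓ) := by
  rw [rotheSum, Nat.sum_antidiagonal_eq_sum_range_succ_mk, range_eq_Ico,
    sum_eq_sum_Ico_succ_bot n.succ_pos, zero_add, Nat.succ_eq_add_one,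
    Ico_add_one_right_eq_Icc, rotheCoeff_zero, one_mul, Nat.sub_zero]

end Rothe

theorem rotheCoeff_neg_natCast (N : ℕ) {ℓ : ℕ} (hℓ : 1 ≤ ℓ) :
    rotheCoeff (-(N : ℚ)) (N + 1) ℓ = -((N : ℚ) / ℓ * ((N + 1) * (ℓ - 1)).choose (ℓ - 1)) := by
  obtain ⟨m, rfl⟩ := Nat.exists_eq_add_of_le' hℓ
  have h := succ_nsmul_rotheCoeff_succ (-(N : ℚ)) (N + 1) m
  rw [show -(N : ℚ) + (m + 1) * (N + 1) - 1 = ((N + 1) * m : ℕ) by push_cast; ring,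
    Ring.choose_natCast, nsmul_eq_mul] at h
  simp only [Nat.add_sub_cancel]
  field_simp
  push_cast at h ⊢
  linear_combination h

theorem binomial_recursion_general (N : ℕ) (χ : ℤ) (d k : ℕ) :
    gchoose (-χ - N + d * ((N : ℤ) + 1)) k
      = gchoose (-χ + d * ((N : ℤ) + 1)) k
        - ∑ ℓ ∈ Finset.Icc 1 k,
            (N : ℚ) / (ℓ : ℚ) * (((N + 1) * (ℓ - 1)).choose (ℓ - 1) : ℚ) *
              gchoose (-χ + ((d : ℤ) - ℓ) * ((N : ℤ) + 1)) (k - ℓ) := by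
  set y : ℚ := -χ + (d - k) * (N + 1)
  have hrothe := rotheSum_eq_choose (-N) (N + 1) y k
  have hterm (ℓ : ℕ) (hℓ : ℓ ∈ Icc 1 k) :
      rotheCoeff (-(N : ℚ)) (N + 1) ℓ * Ring.choose (y + (k - ℓ : ℕ) * (N + 1)) (k - ℓ)
        = -((N : ℚ) / ℓ * ((N + 1) * (ℓ - 1)).choose (ℓ - 1)
            * Ring.choose (-χ + (d - ℓ) * (N + 1) : ℚ) (k - ℓ)) := by
    obtain ⟨hℓ₁, hℓ₂⟩ := mem_Icc.1 hℓ
    rw [rotheCoeff_neg_natCast N hℓ₁, Nat.cast_sub hℓ₂,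
      show y + ((k : ℚ) - ℓ) * (N + 1) = -χ + (d - ℓ) * (N + 1) by ring]
    ring
  push_cast at hrothe
  rw [rotheSum_eq_choose_add_sum_Icc, sum_congr rfl hterm, sum_neg_distrib] at hrothe
  simp only [gchoose_eq_choose]
  push_cast
  rw [show -χ - N + d * (N + 1) = -N + y + k * (N + 1) by ring,
    show -χ + d * (N + 1) = y + k * (N + 1) by ring]
  linear_combination -hrothe

theorem binomial_recursion (N : ℕ) (hN : 1 ≤ N) (χ : ℤ) (d k : ℕ) (hk : k ≤ d) :
    gchoose (-χ - N + d * ((N : ℤ) + 1)) k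
      = gchoose (-χ + d * ((N : ℤ) + 1)) k
        - ∑ ℓ ∈ Finset.Icc 1 k,
            (N : ℚ) / (ℓ : ℚ) * (((N + 1) * (ℓ - 1)).choose (ℓ - 1) : ℚ) *
              gchoose (-χ + ((d : ℤ) - ℓ) * ((N : ℤ) + 1)) (k - ℓ) :=
  binomial_recursion_general N χ d k
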